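/- Let (P_i)_{i ∈ ℕ} be an infinite family of pairwise vertex-disjoint paths in the graph G such that each P_i joins a vertex (a_i, 0) with a_i < 0 to a vertex (b_i, 0) with b_i ≥ 0. Then the subgraph of G induced on the complement of the union of the vertex sets of the paths P_i is rayless, i.e., it contains no ray as a subgraph. -/

import Mathlib

open SimpleGraph

/-- A model (inflated copy) of `X` in `G`: pairwise disjoint nonempty connected branch
sets `B v`, one for each vertex `v` of `X`, such that for every edge `v w` of `X` there is
an edge of `G` between `B v` and `B w`. -/
structure IsMinorModel {α β : Type*} (X : SimpleGraph α) (G : SimpleGraph β)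
    (B : α → Set β) : Prop where
  nonempty : ∀ v, (B v).Nonempty
  connected : ∀ v, (G.induce (B v)).Connected
  pairwise_disjoint : ∀ ⦃v w⦄, v ≠ w → Disjoint (B v) (B w)
  adj : ∀ ⦃v w⦄, X.Adj v w → ∃ x ∈ B v, ∃ y ∈ B w, G.Adj x y

/-- An `ι`-indexed family of pairwise vertex-disjoint models of `X` in `G`. -/
def DisjointModels {α β ι : Type*} (X : SimpleGraph α) (G : SimpleGraph β)
    (B : ι → α → Set β) : Prop :=
  (∀ k, IsMinorModel X G (B k)) ∧
    ∀ ⦃k l⦄, k ≠ l → Disjoint (⋃ v, B k v) (⋃ v, B l v)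

/-- `X` is ubiquitous (w.r.t. the minor relation): every graph containing `n` pairwise
vertex-disjoint `X`-minors for every `n` contains infinitely many pairwise
vertex-disjoint `X`-minors. -/
def Ubiquitous {α : Type*} (X : SimpleGraph α) : Prop :=
  ∀ ⦃β : Type⦄ (G : SimpleGraph β),
    (∀ n : ℕ, ∃ B : Fin n → α → Set β, DisjointModels X G B) →
    ∃ B : ℕ → α → Set β, DisjointModels X G B

def Ray : SimpleGraph ℕ := SimpleGraph.fromRel (fun n m => m = n + 1)

abbrev K5 : SimpleGraph (Fin 5) := ⊤

abbrev K33 : SimpleGraph (Fin 3 ⊕ Fin 3) := completeBipartiteGraph (Fin 3) (Fin 3)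

/-- Vertices of the 1-sum `I` of `K₅` and `K₃,₃`: the five vertices of `K₅` (with
`Sum.inl 0` the identified vertex, which is also a vertex of the left side of `K₃,₃`),
plus the two remaining left-side vertices and the three right-side vertices of `K₃,₃`. -/
abbrev IV : Type := Fin 5 ⊕ (Fin 2 ⊕ Fin 3)

def IRel : IV → IV → Prop
  | Sum.inl _, Sum.inl _ => True
  | Sum.inl i, Sum.inr (Sum.inr _) => i = 0
  | Sum.inr (Sum.inl _), Sum.inr (Sum.inr _) => True
  | _, _ => False

/-- The graph `I`: the 1-sum of `K₅` and `K₃,₃`, identifying one vertex of each. -/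
def GraphI : SimpleGraph IV := SimpleGraph.fromRel IRel

def GraphH : SimpleGraph (IV ⊕ ℕ) := GraphI ⊕g Ray

def GridRel (p q : ℤ × ℕ) : Prop :=
  (q.1 = p.1 + 1 ∧ q.2 = p.2) ∨ (q.1 = p.1 ∧ q.2 = p.2 + 1)

/-- The half-grid on `ℤ × ℕ`: vertices adjacent iff they differ by exactly `1` in one
coordinate and agree in the other. -/
def HalfGrid : SimpleGraph (ℤ × ℕ) := SimpleGraph.fromRel GridRel

abbrev NegInt : Type := {a : ℤ // a < 0}
abbrev NonnegInt : Type := {b : ℤ // 0 ≤ b}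

/-- Vertices of `G`: the half-grid vertices, plus for each `a < 0` four new vertices
(completing the `K₅` attached at `(a,0)`), plus for each `b ≥ 0` five new vertices
(completing the `K₃,₃` attached at `(b,0)`; the new vertices `0, 1` together with
`(b,0)` form the left side and the new vertices `2, 3, 4` form the right side). -/
abbrev GV : Type := (ℤ × ℕ) ⊕ ((NegInt × Fin 4) ⊕ (NonnegInt × Fin 5))

def GRel : GV → GV → Prop
  | Sum.inl p, Sum.inl q => GridRel p q
  | Sum.inl p, Sum.inr (Sum.inl w) => p = (w.1.1, 0)
  | Sum.inl p, Sum.inr (Sum.inr w) => p = (w.1.1, 0) ∧ 2 ≤ (w.2 : ℕ)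
  | Sum.inr (Sum.inl w), Sum.inr (Sum.inl w') => w.1 = w'.1
  | Sum.inr (Sum.inr w), Sum.inr (Sum.inr w') => w.1 = w'.1 ∧ (w.2 : ℕ) < 2 ∧ 2 ≤ (w'.2 : ℕ)
  | _, _ => False

/-- The graph `G`: the half-grid with a `K₅` attached at each `(a,0)`, `a < 0`, and a
`K₃,₃` attached at each `(b,0)`, `b ≥ 0`. -/
def GraphG : SimpleGraph GV := SimpleGraph.fromRel GRel

def K5copy (a : NegInt) : Set GV :=
  {Sum.inl (a.1, 0)} ∪ {x | ∃ i : Fin 4, x = Sum.inr (Sum.inl (a, i))}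

def K33copy (b : NonnegInt) : Set GV :=
  {Sum.inl (b.1, 0)} ∪ {x | ∃ i : Fin 5, x = Sum.inr (Sum.inr (b, i))}

/-!
Fix a grid point `z = (x, y)` and a walk `W` between two vertices of the bottom row, and count
modulo 2 the crossings of `W` with the vertical half-line `{x + 1/2} × (y, ∞)`; the vertices of
the attached `K₅`s and `K₃,₃`s are projected to their attachment points, so only grid edges
cross. Moving `z` along an edge that avoids `W` does not change this parity, so it is constant
along a ray avoiding `W`; it vanishes as soon as no vertex of `W` lies above `z` in its column,
which happens somewhere along the ray because the ray leaves every finite set.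
On the other hand, by disjointness all but finitely many paths `P i` avoid the box between
column `x` and column `0` up to height `y`. Such a path starts left of the line `x + 1/2` and
ends right of it without crossing it at heights `≤ y`, so its crossing parity is `1`.
-/

theorem SimpleGraph.Walk.sum_darts_eq_sub {V M : Type*} [AddCommGroup M] {G : SimpleGraph V}
    {u v : V} (W : G.Walk u v) (c : V → V → M) (φ : V → M)
    (h : ∀ d ∈ W.darts, c d.fst d.snd = φ d.snd - φ d.fst) :
    (W.darts.map fun d => c d.fst d.snd).sum = φ v - φ u := by
  induction W with
  | nil => simp
  | cons hadj W ih =>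
    simp only [Walk.darts_cons, List.map_cons, List.sum_cons, List.mem_cons,
      forall_eq_or_imp] at h ⊢
    rw [h.1, ih h.2]
    abel

theorem Set.finite_setOf_inter_nonempty {ι α : Type*} {S : ι → Set α}
    (hS : Pairwise (Function.onFun Disjoint S)) {A : Set α} (hA : A.Finite) :
    {i | (A ∩ S i).Nonempty}.Finite := by
  refine (hA.biUnion fun v _ => (?_ : {i | v ∈ S i}.Subsingleton).finite).subset ?_
  · intro i hi j hj
    by_contra hij
    exact Set.disjoint_left.mp (hS hij) hi hj
  · rintro i ⟨v, hvA, hvS⟩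
    exact Set.mem_biUnion hvA hvS

namespace GraphG

open Set

def gridPoint : GV → ℤ × ℕ
  | .inl p => p
  | .inr (.inl w) => (w.1.1, 0)
  | .inr (.inr w) => (w.1.1, 0)

def gridPointTag : GV → (ℤ × ℕ) × Option (Fin 4 ⊕ Fin 5)
  | .inl p => (p, none)
  | .inr (.inl w) => ((w.1.1, 0), some (.inl w.2))
  | .inr (.inr w) => ((w.1.1, 0), some (.inr w.2))

lemma gridPointTag_injective : Function.Injective gridPointTag := by
  rintro (p | ⟨a, i⟩ | ⟨b, i⟩) (q | ⟨a', i'⟩ | ⟨b', i'⟩) h <;>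
    simp_all [gridPointTag, Subtype.ext_iff]

lemma finite_preimage_gridPoint {F : Set (ℤ × ℕ)} (hF : F.Finite) :
    (gridPoint ⁻¹' F).Finite := by
  refine ((hF.prod (finite_univ (α := Option (Fin 4 ⊕ Fin 5)))).preimage
    gridPointTag_injective.injOn).subset ?_
  rintro (p | w | w) hp <;> simpa [gridPointTag, gridPoint] using hp

lemma gridPoint_eq_or_halfGrid_adj {u v : GV} (h : GraphG.Adj u v) :
    gridPoint u = gridPoint v ∨ ∃ p q, u = .inl p ∧ v = .inl q ∧ HalfGrid.Adj p q := by
  rw [GraphG, fromRel_adj] at h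
  rcases u with p | w | w <;> rcases v with q | w' | w' <;>
    simp_all [GRel, gridPoint, HalfGrid, Subtype.ext_iff] <;> omega

lemma halfGrid_adj_cases {p q : ℤ × ℕ} (h : HalfGrid.Adj p q) :
    (q.1 = p.1 + 1 ∨ p.1 = q.1 + 1) ∧ q.2 = p.2 ∨
      q.1 = p.1 ∧ (q.2 = p.2 + 1 ∨ p.2 = q.2 + 1) := by
  simp only [HalfGrid, fromRel_adj, GridRel] at h
  omega

open Classical in
/-- `1` iff `p q` is a horizontal edge of the grid crossing the vertical line `x + 1/2` at a
height in `s`. -/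
noncomputable def cross (x : ℤ) (s : Set ℕ) (p q : ℤ × ℕ) : ZMod 2 :=
  if p.2 = q.2 ∧ p.2 ∈ s ∧ (p.1 = x ∧ q.1 = x + 1 ∨ p.1 = x + 1 ∧ q.1 = x) then 1 else 0

def leftIndicator (x : ℤ) (p : ℤ × ℕ) : ZMod 2 := if p.1 ≤ x then 1 else 0

def aboveIndicator (z p : ℤ × ℕ) : ZMod 2 := if p.1 = z.1 ∧ z.2 < p.2 then 1 else 0

lemma cross_self (x : ℤ) (s : Set ℕ) (p : ℤ × ℕ) : cross x s p p = 0 :=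
  if_neg (by omega)

lemma cross_add_cross_compl {p q : ℤ × ℕ} (h : HalfGrid.Adj p q) (x : ℤ) (s : Set ℕ) :
    cross x s p q + cross x sᶜ p q = leftIndicator x q - leftIndicator x p := by
  obtain ⟨p1, p2⟩ := p
  obtain ⟨q1, q2⟩ := q
  have := halfGrid_adj_cases h
  dsimp only at this
  by_cases hs : p2 ∈ s <;>
    simp only [cross, leftIndicator, mem_compl_iff, hs, not_true,
      not_false_eq_true, true_and, false_and, and_false, if_false] <;>
    split_ifs <;> first | decide | omega

lemma cross_add_cross_succ {p q : ℤ × ℕ} (h : HalfGrid.Adj p q) (x : ℤ) (y : ℕ)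
    (hp : p ≠ (x + 1, y)) (hq : q ≠ (x + 1, y)) :
    cross x (Ioi y) p q + cross (x + 1) (Ioi y) p q =
      aboveIndicator (x + 1, y) q - aboveIndicator (x + 1, y) p := by
  obtain ⟨p1, p2⟩ := p
  obtain ⟨q1, q2⟩ := q
  simp only [cross, aboveIndicator, mem_Ioi, ne_eq, Prod.mk.injEq] at *
  have := halfGrid_adj_cases h
  split_ifs <;> first | decide | omega

lemma cross_Ioi_succ {p q : ℤ × ℕ} (h : HalfGrid.Adj p q) (x : ℤ) (y : ℕ)
    (hp : p ≠ (x, y + 1)) (hq : q ≠ (x, y + 1)) :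
    cross x (Ioi y) p q = cross x (Ioi (y + 1)) p q := by
  obtain ⟨p1, p2⟩ := p
  obtain ⟨q1, q2⟩ := q
  simp only [cross, mem_Ioi, ne_eq, Prod.mk.injEq] at *
  have := halfGrid_adj_cases h
  split_ifs <;> first | decide | omega

lemma cross_eq_zero {p q : ℤ × ℕ} {x : ℤ} {s : Set ℕ} (hp : p ∉ {x} ×ˢ s)
    (hq : q ∉ {x} ×ˢ s) : cross x s p q = 0 := by
  refine if_neg ?_
  rintro ⟨h2, hs, ⟨h1, -⟩ | ⟨-, h1⟩⟩
  · exact hp ⟨h1, hs⟩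
  · exact hq ⟨h1, h2 ▸ hs⟩

variable {u v : GV}

/-- The parity of the number of crossings of `W` with the vertical line `x + 1/2` at heights
in `s`. -/
noncomputable def crossings (x : ℤ) (s : Set ℕ) (W : GraphG.Walk u v) : ZMod 2 :=
  (W.darts.map fun d => cross x s (gridPoint d.fst) (gridPoint d.snd)).sum

lemma sum_darts_gridPoint_eq_sub {M : Type*} [AddCommGroup M] (W : GraphG.Walk u v)
    (c : ℤ × ℕ → ℤ × ℕ → M) (φ : ℤ × ℕ → M) (hc : ∀ p, c p p = 0)
    (hgrid : ∀ p q, HalfGrid.Adj p q → .inl p ∈ W.support → .inl q ∈ W.support →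
      c p q = φ q - φ p) :
    (W.darts.map fun d => c (gridPoint d.fst) (gridPoint d.snd)).sum =
      φ (gridPoint v) - φ (gridPoint u) := by
  refine W.sum_darts_eq_sub (fun w w' => c (gridPoint w) (gridPoint w')) (φ ∘ gridPoint)
    fun d hd => ?_
  rcases gridPoint_eq_or_halfGrid_adj d.adj with h | ⟨p, q, hp, hq, hpq⟩
  · simp [h, hc]
  · have hps := W.dart_fst_mem_support_of_mem_darts hd
    have hqs := W.dart_snd_mem_support_of_mem_darts hd
    rw [hp] at hps
    rw [hq] at hqs
    simp only [Function.comp_apply, hp, hq, gridPoint]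
    exact hgrid p q hpq hps hqs

lemma crossings_add_crossings_compl (W : GraphG.Walk u v) (x : ℤ) (s : Set ℕ) :
    crossings x s W + crossings x sᶜ W =
      leftIndicator x (gridPoint v) - leftIndicator x (gridPoint u) := by
  rw [crossings, crossings, ← List.sum_map_add]
  exact sum_darts_gridPoint_eq_sub W _ _ (fun p => by simp [cross_self])
    fun p q hpq _ _ => cross_add_cross_compl hpq x s

lemma crossings_add_crossings_succ (W : GraphG.Walk u v) (x : ℤ) (y : ℕ)
    (hW : .inl (x + 1, y) ∉ W.support) :
    crossings x (Ioi y) W + crossings (x + 1) (Ioi y) W =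
      aboveIndicator (x + 1, y) (gridPoint v) - aboveIndicator (x + 1, y) (gridPoint u) := by
  rw [crossings, crossings, ← List.sum_map_add]
  exact sum_darts_gridPoint_eq_sub W _ _ (fun p => by simp [cross_self])
    fun p q hpq hp hq => cross_add_cross_succ hpq x y (by rintro rfl; exact hW hp)
      (by rintro rfl; exact hW hq)

lemma crossings_Ioi_succ (W : GraphG.Walk u v) (x : ℤ) (y : ℕ)
    (hW : .inl (x, y + 1) ∉ W.support) :
    crossings x (Ioi y) W = crossings x (Ioi (y + 1)) W := by
  rw [← CharTwo.add_eq_zero, crossings, crossings, ← List.sum_map_add]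
  simpa using sum_darts_gridPoint_eq_sub W
    (fun p q => cross x (Ioi y) p q + cross x (Ioi (y + 1)) p q) 0
    (fun p => by simp [cross_self])
    fun p q hpq hp hq => by
      rw [Pi.zero_apply, Pi.zero_apply, sub_self,
        cross_Ioi_succ hpq x y (by rintro rfl; exact hW hp) (by rintro rfl; exact hW hq),
        CharTwo.add_self_eq_zero]

lemma crossings_eq_zero {W : GraphG.Walk u v} {x : ℤ} {s : Set ℕ}
    (h : ∀ z ∈ s, .inl (x, z) ∉ W.support) : crossings x s W = 0 := by
  have hW : ∀ p, .inl p ∈ W.support → p ∉ {x} ×ˢ s := by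
    rintro ⟨p1, p2⟩ hp ⟨rfl, hs⟩
    exact h p2 hs hp
  rw [crossings]
  simpa using sum_darts_gridPoint_eq_sub W (cross x s) 0 (cross_self x s)
    fun p q _ hp hq => by
      rw [cross_eq_zero (hW p hp) (hW q hq), Pi.zero_apply, Pi.zero_apply, sub_self]

/-- The crossing parity of `W` with the vertical half-line `{z.1 + 1/2} × (z.2, ∞)`. -/
noncomputable def crossingsAbove (z : ℤ × ℕ) (W : GraphG.Walk u v) : ZMod 2 :=
  crossings z.1 (Ioi z.2) W

lemma crossingsAbove_eq_of_gridRel {s t : ℤ} (W : GraphG.Walk (.inl (s, 0)) (.inl (t, 0)))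
    {p q : ℤ × ℕ} (h : GridRel p q) (hp : .inl p ∉ W.support) (hq : .inl q ∉ W.support) :
    crossingsAbove p W = crossingsAbove q W := by
  obtain ⟨p1, p2⟩ := p
  obtain ⟨q1, q2⟩ := q
  simp only [GridRel] at h
  obtain ⟨rfl, rfl⟩ | ⟨rfl, rfl⟩ := h
  · refine CharTwo.add_eq_zero.mp ?_
    simpa [crossingsAbove, aboveIndicator, gridPoint] using crossings_add_crossings_succ W _ _ hq
  · exact crossings_Ioi_succ W _ _ hq

lemma crossingsAbove_eq_of_adj {s t : ℤ} (W : GraphG.Walk (.inl (s, 0)) (.inl (t, 0)))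
    (h : GraphG.Adj u v) (hu : u ∉ W.support) (hv : v ∉ W.support) :
    crossingsAbove (gridPoint u) W = crossingsAbove (gridPoint v) W := by
  rcases gridPoint_eq_or_halfGrid_adj h with h | ⟨p, q, rfl, rfl, hpq⟩
  · rw [h]
  · rcases hpq.2 with hpq | hqp
    · exact crossingsAbove_eq_of_gridRel W hpq hu hv
    · exact (crossingsAbove_eq_of_gridRel W hqp hv hu).symm

lemma crossingsAbove_ray {s t : ℤ} (W : GraphG.Walk (.inl (s, 0)) (.inl (t, 0)))
    {f : ℕ → GV} (hadj : ∀ n, GraphG.Adj (f n) (f (n + 1))) (hf : ∀ n, f n ∉ W.support)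
    (n : ℕ) : crossingsAbove (gridPoint (f n)) W = crossingsAbove (gridPoint (f 0)) W := by
  induction n with
  | zero => rfl
  | succ n ih => rw [← ih, crossingsAbove_eq_of_adj W (hadj n) (hf n) (hf (n + 1))]

lemma exists_crossingsAbove_eq_zero (W : GraphG.Walk u v) {f : ℕ → GV}
    (hf : Function.Injective f) : ∃ n, crossingsAbove (gridPoint (f n)) W = 0 := by
  let F : Set (ℤ × ℕ) :=
    ⋃ w ∈ {w | w ∈ W.support}, {(gridPoint w).1} ×ˢ Iio (gridPoint w).2
  have hF : F.Finite :=
    W.support.finite_toSet.biUnion fun w _ => (finite_singleton _).prod (finite_Iio _)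
  obtain ⟨n, hn⟩ := ((finite_preimage_gridPoint hF).preimage hf.injOn).exists_notMem
  exact ⟨n, crossings_eq_zero fun z hz hw => hn (mem_biUnion hw ⟨rfl, hz⟩)⟩

end GraphG

open GraphG Set in
theorem statement8_general (a b : ℕ → ℤ) (ha : ∀ i, a i < 0) (hb : ∀ i, 0 ≤ b i)
    (P : ∀ i : ℕ, GraphG.Walk (Sum.inl (a i, 0)) (Sum.inl (b i, 0)))
    (hdisj : ∀ ⦃i j : ℕ⦄, i ≠ j →
      Disjoint {v | v ∈ (P i).support} {v | v ∈ (P j).support}) :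
    ¬ ∃ f : ℕ → GV,
      (∀ n, f n ∈ (⋃ i, {v | v ∈ (P i).support})ᶜ) ∧
      Function.Injective f ∧
      ∀ n, GraphG.Adj (f n) (f (n + 1)) := by
  rintro ⟨f, hf, hinj, hadj⟩
  have hfP : ∀ i n, f n ∉ (P i).support := fun i n hn => hf n (mem_iUnion.mpr ⟨i, hn⟩)
  rcases hz : gridPoint (f 0) with ⟨x, y⟩
  obtain ⟨i, hi⟩ := (finite_setOf_inter_nonempty hdisj
    (((finite_uIcc x 0).prod (finite_Iic y)).image Sum.inl)).exists_notMem
  have hbox : ∀ c h, h ≤ y → c ∈ uIcc x 0 → .inl (c, h) ∉ (P i).support :=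
    fun c h hh hc hmem => hi ⟨_, ⟨(c, h), ⟨hc, hh⟩, rfl⟩, hmem⟩
  have hx : a i ≤ x ∧ x < b i := by
    have hai := mt (hbox (a i) 0 y.zero_le) (not_not.mpr (P i).start_mem_support)
    have hbi := mt (hbox (b i) 0 y.zero_le) (not_not.mpr (P i).end_mem_support)
    rw [mem_uIcc] at hai hbi
    have := ha i
    have := hb i
    omega
  have hhigh : crossings x (Ioi y) (P i) = 0 := by
    obtain ⟨n, hn⟩ := exists_crossingsAbove_eq_zero (P i) hinj
    rwa [crossingsAbove_ray (P i) hadj (hfP i), hz] at hn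
  have hlow : crossings x (Iic y) (P i) = 0 :=
    crossings_eq_zero fun h hh => hbox x h hh left_mem_uIcc
  have := crossings_add_crossings_compl (P i) x (Ioi y)
  rw [compl_Ioi, hhigh, hlow] at this
  simp [leftIndicator, gridPoint, hx.1, hx.2.not_ge] at this

/-- If `(P i)
` is an infinite family of pairwise vertex-disjoint paths in
`G`, each joining a vertex `(a i, 0)` with `a i < 0` to a vertex `(b i, 0)` with
`b i ≥ 0`, then the subgraph of `G` induced on the complement of the union of the
vertex sets of the paths is rayless: it contains no ray as a subgraph. -/
theorem statement8 (a b : ℕ → ℤ) (ha : ∀ i, a i < 0) (hb : ∀ i, 0 ≤ b i)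
    (P : ∀ i : ℕ, GraphG.Walk (Sum.inl (a i, 0)) (Sum.inl (b i, 0)))
    (hpath : ∀ i, (P i).IsPath)
    (hdisj : ∀ ⦃i j : ℕ⦄, i ≠ j →
      Disjoint {v | v ∈ (P i).support} {v | v ∈ (P j).support}) :
    ¬ ∃ f : ℕ → GV,
      (∀ n, f n ∈ (⋃ i, {v | v ∈ (P i).support})ᶜ) ∧
      Function.Injective f ∧
      ∀ n, GraphG.Adj (f n) (f (n + 1)) :=
  statement8_general a b ha hb P hdisj
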